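/- arXiv:2204.01160 — 2 statements merged into one kernel-verified Lean document; each statement's English description precedes it below -/
import Mathlib

section
/- Hyperbolic discounting admits preference reversal while exponential discounting does not: for d(t) = 1/(1 + tγ) with γ > 0, there exist rewards r1 < r2, delays t and k > 0, and a shift τ > 0 such that r1 · d(t) > r2 · d(t+k) but r1 · d(t+τ) < r2 · d(t+τ+k); whereas for d(t) = λ^t with 0 < λ < 1, for all r1, r2 > 0, t, k, τ ≥ 0, the sign of r1 · d(t) − r2 · d(t+k) equals the sign of r1 · d(t+τ) − r2 · d(t+τ+k). -/
/-!
Exponential discounting factors through shifts: `λ ^ (s + τ) = λ ^ s * λ ^ τ`, so postponing both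
options multiplies the difference of their discounted values by `λ ^ τ > 0`, which preserves its
sign. Hyperbolic discounting does not factor this way: measuring delays in units of `1 / γ`,
the reward `1` now beats `2` after two units (`1 > 2 / 3`), but after a shift of two units
`2` at four units beats `1` at two units (`1 / 3 < 2 / 5`).
-/

theorem exists_hyperbolic_preference_reversal {γ : ℝ} (hγ : 0 < γ) :
    ∃ r₁ r₂ t k τ : ℝ, r₁ < r₂ ∧ 0 ≤ t ∧ 0 < k ∧ 0 < τ ∧
      r₁ * (1 / (1 + t * γ)) > r₂ * (1 / (1 + (t + k) * γ)) ∧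
      r₁ * (1 / (1 + (t + τ) * γ)) < r₂ * (1 / (1 + (t + τ + k) * γ)) := by
  have two_units : (0 + 2 / γ) * γ = 2 := by field_simp; ring
  have four_units : (0 + 2 / γ + 2 / γ) * γ = 4 := by field_simp; ring
  refine ⟨1, 2, 0, 2 / γ, 2 / γ, by norm_num, le_rfl, by positivity, by positivity, ?_, ?_⟩
  · rw [two_units]; norm_num
  · rw [two_units, four_units]; norm_num

section ExponentialDiscount

variable {lam r₁ r₂ t k τ : ℝ}

theorem exponential_discount_sub_shift (hlam : 0 < lam) :
    r₁ * lam ^ (t + τ) - r₂ * lam ^ (t + τ + k) = (r₁ * lam ^ t - r₂ * lam ^ (t + k)) * lam ^ τ := by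
  rw [add_right_comm, Real.rpow_add hlam, Real.rpow_add hlam]
  ring

theorem exponential_discount_gt_shift_iff (hlam : 0 < lam) :
    r₁ * lam ^ (t + τ) > r₂ * lam ^ (t + τ + k) ↔ r₁ * lam ^ t > r₂ * lam ^ (t + k) := by
  rw [gt_iff_lt, gt_iff_lt, ← sub_pos, exponential_discount_sub_shift hlam,
    mul_pos_iff_of_pos_right (Real.rpow_pos_of_pos hlam τ), sub_pos]

theorem exponential_discount_eq_shift_iff (hlam : 0 < lam) :
    r₁ * lam ^ (t + τ) = r₂ * lam ^ (t + τ + k) ↔ r₁ * lam ^ t = r₂ * lam ^ (t + k) := by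
  rw [← sub_eq_zero, exponential_discount_sub_shift hlam,
    mul_eq_zero_iff_right (Real.rpow_pos_of_pos hlam τ).ne', sub_eq_zero]

end ExponentialDiscount

/-- hyperbolic discounting admits preference reversal while
exponential discounting does not. -/
theorem hyperbolic_preference_reversal_exponential_consistent :
    (∀ γ : ℝ, 0 < γ →
      ∃ r₁ r₂ t k τ : ℝ, r₁ < r₂ ∧ 0 ≤ t ∧ 0 < k ∧ 0 < τ ∧
        r₁ * (1 / (1 + t * γ)) > r₂ * (1 / (1 + (t + k) * γ)) ∧
        r₁ * (1 / (1 + (t + τ) * γ)) < r₂ * (1 / (1 + (t + τ + k) * γ))) ∧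
    (∀ lam : ℝ, 0 < lam → lam < 1 →
      ∀ r₁ r₂ t k τ : ℝ, 0 < r₁ → 0 < r₂ → 0 ≤ t → 0 ≤ k → 0 ≤ τ →
        ((r₁ * lam ^ t > r₂ * lam ^ (t + k) ↔
            r₁ * lam ^ (t + τ) > r₂ * lam ^ (t + τ + k)) ∧
         (r₁ * lam ^ t = r₂ * lam ^ (t + k) ↔
            r₁ * lam ^ (t + τ) = r₂ * lam ^ (t + τ + k)))) :=
  ⟨fun _ hγ => exists_hyperbolic_preference_reversal hγ,
    fun _ hlam _ _ _ _ _ _ _ _ _ _ _ =>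
      ⟨(exponential_discount_gt_shift_iff hlam).symm,
        (exponential_discount_eq_shift_iff hlam).symm⟩⟩
end

section
/- If Q*_λ denotes a value function computed with exponential discount factor λ as Q*_λ(s,a) = Σ_{t≥0} λ^t r_t(s,a) for a fixed bounded reward sequence r_t with |r_t| ≤ R, then the hyperbolically discounted value Q*_γ(s,a) = Σ_{t≥0} (1/(1+tγ)) r_t(s,a) equals ∫_0^1 (1/γ) λ^{1/γ−1} Q*_λ(s,a) dλ, and all series and integrals involved converge absolutely. -/
/-! Since `∫₀¹ λ^(a-1) λ^t dλ = 1/(a+t)`, taking `a = 1/γ` and scaling by `1/γ` turns the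
exponential weight `λ^t` into the hyperbolic weight `1/(1+tγ)`. For a finite-horizon reward
sequence the exponential value is a finite sum in `λ`, so the integral may be taken term by term. -/

open MeasureTheory

section

variable {a : ℝ}

lemma intervalIntegrable_rpow_sub_one_mul_pow (ha : 0 < a) (t : ℕ) :
    IntervalIntegrable (fun x : ℝ => x ^ (a - 1) * x ^ t) volume 0 1 := by
  have hexp : (-1 : ℝ) < a - 1 + t := by linarith [(Nat.cast_nonneg t : (0 : ℝ) ≤ t)]
  refine (intervalIntegral.intervalIntegrable_rpow' hexp).congr fun x hx => ?_
  rw [Set.uIoc_of_le zero_le_one] at hx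
  simp only [Real.rpow_add hx.1, Real.rpow_natCast]

lemma integral_rpow_sub_one_mul_pow (ha : 0 < a) (t : ℕ) :
    ∫ x in (0 : ℝ)..1, x ^ (a - 1) * x ^ t = 1 / (a + t) := by
  have hexp : (-1 : ℝ) < a - 1 + t := by linarith [(Nat.cast_nonneg t : (0 : ℝ) ≤ t)]
  have hpos : (0 : ℝ) < a + t := by linarith [(Nat.cast_nonneg t : (0 : ℝ) ≤ t)]
  calc ∫ x in (0 : ℝ)..1, x ^ (a - 1) * x ^ t
      = ∫ x in (0 : ℝ)..1, x ^ (a - 1 + t) :=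
        intervalIntegral.integral_congr_ae <| Filter.Eventually.of_forall fun x hx => by
          rw [Set.uIoc_of_le zero_le_one] at hx
          simp only [Real.rpow_add hx.1, Real.rpow_natCast]
    _ = 1 / (a + t) := by
        rw [integral_rpow (Or.inl hexp), show a - 1 + t + 1 = a + t by ring, Real.one_rpow,
          Real.zero_rpow hpos.ne']
        ring

lemma integral_hyperbolic_weight_mul_pow {γ : ℝ} (hγ : 0 < γ) (t : ℕ) :
    ∫ x in (0 : ℝ)..1, 1 / γ * x ^ (1 / γ - 1) * x ^ t = 1 / (1 + t * γ) := by
  simp only [mul_assoc, intervalIntegral.integral_const_mul,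
    integral_rpow_sub_one_mul_pow (one_div_pos.mpr hγ) t]
  field_simp

lemma integral_mul_tsum_pow_mul_of_finite_support {w : ℝ → ℝ} {b c : ℝ}
    (hw : ∀ t : ℕ, IntervalIntegrable (fun x => w x * x ^ t) volume b c)
    {r : ℕ → ℝ} (s : Finset ℕ) (hr : ∀ t ∉ s, r t = 0) :
    ∫ x in b..c, w x * ∑' t, x ^ t * r t = ∑' t, (∫ x in b..c, w x * x ^ t) * r t := by
  have hsum (f : ℕ → ℝ) : ∑' t, f t * r t = ∑ t ∈ s, f t * r t :=
    tsum_eq_sum fun t ht => by simp [hr t ht]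
  simp only [hsum, Finset.mul_sum, ← mul_assoc]
  rw [intervalIntegral.integral_finsetSum fun t _ => (hw t).mul_const (r t)]
  simp only [intervalIntegral.integral_mul_const]

end

theorem hyperbolic_value_eq_integral_of_exponential_values_general
    (r : ℕ → ℝ) (γ : ℝ) (hγ : 0 < γ)
    (hfin : ∃ N, ∀ t ≥ N, r t = 0) :
    Summable (fun t : ℕ => r t / (1 + t * γ)) ∧
    (∀ lam ∈ Set.Ioo (0:ℝ) 1, Summable (fun t : ℕ => lam ^ t * r t)) ∧
    (∑' t : ℕ, r t / (1 + t * γ)) =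
      ∫ lam in (0:ℝ)..1, (1 / γ) * lam ^ (1 / γ - 1) * (∑' t : ℕ, lam ^ t * r t) := by
  obtain ⟨N, hN⟩ := hfin
  have hzero : ∀ t ∉ Finset.range N, r t = 0 := fun t ht => hN t (by simpa using ht)
  refine ⟨summable_of_ne_finset_zero (s := Finset.range N) fun t ht => by simp [hzero t ht],
    fun lam _ => summable_of_ne_finset_zero (s := Finset.range N) fun t ht => by
      simp [hzero t ht], ?_⟩
  have hw (t : ℕ) :
      IntervalIntegrable (fun x : ℝ => 1 / γ * x ^ (1 / γ - 1) * x ^ t) volume 0 1 := by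
    simpa only [mul_assoc] using
      (intervalIntegrable_rpow_sub_one_mul_pow (one_div_pos.mpr hγ) t).const_mul (1 / γ)
  rw [integral_mul_tsum_pow_mul_of_finite_support hw _ hzero]
  simp_rw [integral_hyperbolic_weight_mul_pow hγ, one_div_mul_eq_div]

/-- for a fixed bounded, finite-horizon reward sequence `r`, the
hyperbolically discounted value `∑_t r_t / (1 + tγ)` equals the mixture of
exponentially discounted values `∫_0^1 (1/γ) λ^{1/γ-1} (∑_t λ^t r_t) dλ`, and
all series involved converge (absolutely). -/
theorem hyperbolic_value_eq_integral_of_exponential_values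
    (r : ℕ → ℝ) (R γ : ℝ) (hγ : 0 < γ)
    (hbd : ∀ t, |r t| ≤ R) (hfin : ∃ N, ∀ t ≥ N, r t = 0) :
    Summable (fun t : ℕ => r t / (1 + t * γ)) ∧
    (∀ lam ∈ Set.Ioo (0:ℝ) 1, Summable (fun t : ℕ => lam ^ t * r t)) ∧
    (∑' t : ℕ, r t / (1 + t * γ)) =
      ∫ lam in (0:ℝ)..1, (1 / γ) * lam ^ (1 / γ - 1) * (∑' t : ℕ, lam ^ t * r t) :=
  hyperbolic_value_eq_integral_of_exponential_values_general r γ hγ hfin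
end
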